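/- arXiv:2210.03964 — 3 statements merged into one kernel-verified Lean document; each statement's English description precedes it below -/
import Mathlib

section
/- Let K : ℝ_{>A} → ℝ_{>0} (A < 0) be continuous and strictly decreasing with K(0) = 1, such that t^{n−1}K(t) is integrable on (0,∞) but t^{n−1}K(t) is not integrable in a neighborhood of A. Then for every l > 0 and every α > 0, there exists a unique β > A/l such that ∫₀^l t^{n−1} K(β t) dt = α. -/
/-!
Write `F(β) = ∫₀^l t^m K(βt) dt` with `m = n - 1`. Monotonicity of `K` makes `F` strictly
decreasing on `(A/l, ∞)`, and also supplies the dominating function for continuity. The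
substitution `s = βt` gives `F(β) = |β|^{-(m+1)} ∫ |s|^m K(s) ds` over the segment between `0`
and `βl`. As `β → ∞` this is `O(1/β)` because `s^m K(s)` is integrable on `(0, ∞)`; as
`β ↓ A/l` the segment exhausts `(A, 0)`, where `|s|^m K(s)` is not integrable, so `F(β) → ∞`.
The intermediate value theorem then hits every `α > 0` exactly once.
-/

open MeasureTheory Set Filter Topology

theorem StrictAntiOn.existsUnique_eq_of_tendsto {F : ℝ → ℝ} {c α : ℝ}
    (hanti : StrictAntiOn F (Ioi c)) (hcont : ContinuousOn F (Ioi c))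
    (htop : Tendsto F atTop (𝓝 0)) (hbot : Tendsto F (𝓝[>] c) atTop) (hα : 0 < α) :
    ∃! b, c < b ∧ F b = α := by
  obtain ⟨b₂, hb₂α, hb₂c⟩ :=
    ((htop.eventually (gt_mem_nhds hα)).and (eventually_gt_atTop c)).exists
  obtain ⟨b₁, hb₁α, hb₁c⟩ :=
    ((hbot.eventually (eventually_gt_atTop α)).and self_mem_nhdsWithin).exists
  have hb₁₂ : b₁ ≤ b₂ := ((hanti.lt_iff_gt hb₂c hb₁c).1 (hb₂α.trans hb₁α)).le
  obtain ⟨b, hb, hFb⟩ := intermediate_value_Icc' hb₁₂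
    (hcont.mono fun x hx => lt_of_lt_of_le hb₁c hx.1) ⟨hb₂α.le, hb₁α.le⟩
  exact ⟨b, ⟨lt_of_lt_of_le hb₁c hb.1, hFb⟩, fun y hy =>
    hanti.injOn hy.1 (lt_of_lt_of_le hb₁c hb.1) (hy.2.trans hFb.symm)⟩

theorem lt_mul_of_div_lt_of_mem_Icc {A l b t : ℝ} (hA : A < 0) (hl : 0 < l) (hb : A / l < b)
    (ht : t ∈ Icc 0 l) : A < b * t := by
  rcases le_or_gt 0 b with hb0 | hb0
  · exact hA.trans_le (mul_nonneg hb0 ht.1)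
  · calc A < b * l := (div_lt_iff₀ hl).1 hb
      _ ≤ b * t := mul_le_mul_of_nonpos_left ht.2 hb0.le

theorem tendsto_setIntegral_Ioo_atTop_of_not_integrableOn {f : ℝ → ℝ} {a b : ℝ} (hab : a < b)
    (hf : ∀ x ∈ Ioo a b, IntegrableOn f (Ioo x b)) (hnn : ∀ x ∈ Ioo a b, 0 ≤ f x)
    (hni : ¬ IntegrableOn f (Ioo a b)) :
    Tendsto (fun x => ∫ s in Ioo x b, f s) (𝓝[>] a) atTop := by
  refine tendsto_atTop.2 fun M => ?_
  by_contra hM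
  -- the integrals grow as `x` decreases, so being frequently below `M` means always below `M`
  have hbounded : ∀ y ∈ Ioo a b, ∫ s in Ioo y b, f s ≤ M := by
    intro y hy
    obtain ⟨x, hxM, hxy⟩ := ((not_eventually.1 hM).and_eventually (Ioo_mem_nhdsGT hy.1)).exists
    calc ∫ s in Ioo y b, f s ≤ ∫ s in Ioo x b, f s :=
          setIntegral_mono_set (hf x ⟨hxy.1, hxy.2.trans hy.2⟩)
            ((ae_restrict_mem measurableSet_Ioo).mono fun s hs => hnn s ⟨hxy.1.trans hs.1, hs.2⟩)
            (Ioo_subset_Ioo_left hxy.2.le).eventuallyLE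
      _ ≤ M := (not_le.1 hxM).le
  have : (comap ((↑) : Ioo a b → ℝ) (𝓝[>] a)).NeBot := comap_neBot_iff_frequently.2 <| by
    rw [Subtype.range_coe]; exact Eventually.frequently (Ioo_mem_nhdsGT hab)
  refine hni (IntegrableOn.mono_set ?_ Ioo_subset_Ioc_self)
  refine integrableOn_Ioc_of_intervalIntegral_norm_bounded_left (I := M)
    (l := comap ((↑) : Ioo a b → ℝ) (𝓝[>] a)) (a := (↑))
    (fun x => (integrableOn_Ioc_iff_integrableOn_Ioo' (by simp)).2 (hf x x.2))
    (tendsto_comap.mono_right nhdsWithin_le_nhds) (Eventually.of_forall fun x => ?_)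
  rw [integral_Ioc_eq_integral_Ioo, setIntegral_congr_fun measurableSet_Ioo
    fun s hs => Real.norm_of_nonneg (hnn s ⟨x.2.1.trans hs.1, hs.2⟩)]
  exact hbounded x x.2

noncomputable def radialMass (K : ℝ → ℝ) (m : ℕ) (l b : ℝ) : ℝ :=
  ∫ t in Ioo 0 l, t ^ m * K (b * t)

namespace radialMass

variable {K : ℝ → ℝ} {m : ℕ} {A l b : ℝ}

theorem eq_intervalIntegral (hl : 0 ≤ l) :
    radialMass K m l b = ∫ t in 0..l, t ^ m * K (b * t) := by
  rw [radialMass, intervalIntegral.integral_of_le hl, integral_Ioc_eq_integral_Ioo]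

theorem eq_of_pos (hl : 0 ≤ l) (hb : 0 < b) :
    radialMass K m l b = (b ^ (m + 1))⁻¹ * ∫ s in Ioo 0 (b * l), s ^ m * K s := by
  have hscale : ∀ t : ℝ, t ^ m * K (b * t) = (b ^ m)⁻¹ * ((b * t) ^ m * K (b * t)) := fun t => by
    rw [mul_pow, ← mul_assoc, inv_mul_cancel_left₀ (pow_ne_zero _ hb.ne')]
  rw [eq_intervalIntegral hl, ← integral_Ioc_eq_integral_Ioo,
    ← intervalIntegral.integral_of_le (by positivity)]
  simp_rw [hscale]
  rw [intervalIntegral.integral_const_mul,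
    intervalIntegral.integral_comp_mul_left (fun s => s ^ m * K s) hb.ne', mul_zero, smul_eq_mul,
    ← mul_assoc, ← mul_inv, pow_succ]

theorem eq_of_neg (hl : 0 ≤ l) (hb : b < 0) :
    radialMass K m l b = ((-b) ^ (m + 1))⁻¹ * ∫ s in Ioo (b * l) 0, |s| ^ m * K s := by
  have hreflect : radialMass K m l b = radialMass (fun s => K (-s)) m l (-b) := by
    simp only [radialMass, neg_mul, neg_neg]
  have hbl : b * l ≤ 0 := mul_nonpos_of_nonpos_of_nonneg hb.le hl
  rw [hreflect, eq_of_pos hl (neg_pos.2 hb), neg_mul, ← integral_Ioc_eq_integral_Ioo,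
    ← intervalIntegral.integral_of_le (neg_nonneg.2 hbl), ← integral_Ioc_eq_integral_Ioo,
    ← intervalIntegral.integral_of_le hbl]
  congr 1
  have hneg := intervalIntegral.integral_comp_neg (a := 0) (b := -(b * l)) (fun s => |s| ^ m * K s)
  rw [neg_neg, neg_zero] at hneg
  rw [← hneg]
  refine intervalIntegral.integral_congr fun s hs => ?_
  rw [uIcc_of_le (neg_nonneg.2 hbl)] at hs
  simp only [abs_neg, abs_of_nonneg hs.1]

theorem continuousOn_integrand (hA : A < 0) (hl : 0 < l) (hK : ContinuousOn K (Ioi A))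
    (hb : A / l < b) : ContinuousOn (fun t => t ^ m * K (b * t)) (Icc 0 l) :=
  (continuous_pow m).continuousOn.mul <| hK.comp (continuous_const.mul continuous_id).continuousOn
    fun _ ht => lt_mul_of_div_lt_of_mem_Icc hA hl hb ht

theorem integrableOn_integrand (hA : A < 0) (hl : 0 < l) (hK : ContinuousOn K (Ioi A))
    (hb : A / l < b) : IntegrableOn (fun t => t ^ m * K (b * t)) (Ioo 0 l) :=
  (continuousOn_integrand hA hl hK hb).integrableOn_Icc.mono_set Ioo_subset_Icc_self

theorem nonneg (hA : A < 0) (hl : 0 < l) (hKpos : ∀ t ∈ Ioi A, 0 < K t) (hb : A / l < b) :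
    0 ≤ radialMass K m l b :=
  setIntegral_nonneg measurableSet_Ioo fun _ ht => mul_nonneg (pow_nonneg ht.1.le _)
    (hKpos _ (lt_mul_of_div_lt_of_mem_Icc hA hl hb (Ioo_subset_Icc_self ht))).le

theorem strictAntiOn (hA : A < 0) (hl : 0 < l) (hKcont : ContinuousOn K (Ioi A))
    (hKanti : StrictAntiOn K (Ioi A)) : StrictAntiOn (radialMass K m l) (Ioi (A / l)) := by
  intro b₁ hb₁ b₂ hb₂ hb₁₂
  have hlt : ∀ t ∈ Ioc 0 l, t ^ m * K (b₂ * t) < t ^ m * K (b₁ * t) := fun t ht =>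
    mul_lt_mul_of_pos_left (hKanti (lt_mul_of_div_lt_of_mem_Icc hA hl hb₁ (Ioc_subset_Icc_self ht))
      (lt_mul_of_div_lt_of_mem_Icc hA hl hb₂ (Ioc_subset_Icc_self ht))
      (mul_lt_mul_of_pos_right hb₁₂ ht.1)) (pow_pos ht.1 m)
  rw [eq_intervalIntegral hl.le, eq_intervalIntegral hl.le]
  exact intervalIntegral.integral_lt_integral_of_continuousOn_of_le_of_exists_lt hl
    (continuousOn_integrand hA hl hKcont hb₂) (continuousOn_integrand hA hl hKcont hb₁)
    (fun t ht => (hlt t ht).le) ⟨l, right_mem_Icc.2 hl.le, hlt l (right_mem_Ioc.2 hl)⟩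

theorem continuousOn (hA : A < 0) (hl : 0 < l) (hKcont : ContinuousOn K (Ioi A))
    (hKanti : StrictAntiOn K (Ioi A)) (hKpos : ∀ t ∈ Ioi A, 0 < K t) :
    ContinuousOn (radialMass K m l) (Ioi (A / l)) := by
  intro b₀ hb₀
  obtain ⟨b', hb', hb'b₀⟩ := exists_between (mem_Ioi.1 hb₀)
  have hmem : ∀ {b}, A / l < b → ∀ t ∈ Ioo 0 l, b * t ∈ Ioi A := fun hb t ht =>
    lt_mul_of_div_lt_of_mem_Icc hA hl hb (Ioo_subset_Icc_self ht)
  refine ContinuousAt.continuousWithinAt <| continuousAt_of_dominated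
    (bound := fun t => t ^ m * K (b' * t)) ?_ ?_ (integrableOn_integrand hA hl hKcont hb') ?_
  · filter_upwards [eventually_gt_nhds hb'b₀] with b hb
    exact (integrableOn_integrand hA hl hKcont (hb'.trans hb)).aestronglyMeasurable
  · filter_upwards [eventually_gt_nhds hb'b₀] with b hb
    filter_upwards [ae_restrict_mem measurableSet_Ioo] with t ht
    rw [Real.norm_of_nonneg (mul_nonneg (pow_nonneg ht.1.le _)
      (hKpos _ (hmem (hb'.trans hb) t ht)).le)]
    exact mul_le_mul_of_nonneg_left (hKanti (hmem hb' t ht) (hmem (hb'.trans hb) t ht)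
      (mul_lt_mul_of_pos_right hb ht.1)).le (pow_nonneg ht.1.le _)
  · filter_upwards [ae_restrict_mem measurableSet_Ioo] with t ht
    exact continuousAt_const.mul <| ContinuousAt.comp (f := fun b => b * t)
      (hKcont.continuousAt (isOpen_Ioi.mem_nhds (hmem hb₀ t ht)))
      (continuous_mul_const t).continuousAt

theorem tendsto_atTop (hA : A < 0) (hl : 0 < l) (hKpos : ∀ t ∈ Ioi A, 0 < K t)
    (hKint : IntegrableOn (fun t => t ^ m * K t) (Ioi 0)) :
    Tendsto (radialMass K m l) atTop (𝓝 0) := by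
  have hnn : ∀ s ∈ Ioi (0 : ℝ), 0 ≤ s ^ m * K s := fun s hs =>
    mul_nonneg (pow_nonneg (le_of_lt hs) _) (hKpos s (hA.trans hs)).le
  set C := ∫ s in Ioi 0, s ^ m * K s
  have hbound : ∀ b ≥ 1, radialMass K m l b ≤ C / b := by
    intro b hb
    have hb0 : 0 < b := zero_lt_one.trans_le hb
    rw [eq_of_pos hl.le hb0]
    calc (b ^ (m + 1))⁻¹ * ∫ s in Ioo 0 (b * l), s ^ m * K s ≤ (b ^ (m + 1))⁻¹ * C := by
          gcongr
          exact setIntegral_mono_set hKint ((ae_restrict_mem measurableSet_Ioi).mono hnn)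
            Ioo_subset_Ioi_self.eventuallyLE
      _ ≤ b⁻¹ * C := by
          gcongr
          · exact setIntegral_nonneg measurableSet_Ioi hnn
          · exact le_self_pow₀ hb (by omega)
      _ = C / b := inv_mul_eq_div b C
  exact tendsto_of_tendsto_of_tendsto_of_le_of_le' tendsto_const_nhds
    (tendsto_const_nhds.div_atTop tendsto_id)
    ((eventually_gt_atTop (A / l)).mono fun b hb => nonneg hA hl hKpos hb)
    ((eventually_ge_atTop 1).mono hbound)

theorem tendsto_nhdsGT (hA : A < 0) (hl : 0 < l) (hKcont : ContinuousOn K (Ioi A))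
    (hKpos : ∀ t ∈ Ioi A, 0 < K t) (hKnint : ¬ IntegrableOn (fun s => |s| ^ m * K s) (Ioo A 0)) :
    Tendsto (radialMass K m l) (𝓝[>] (A / l)) atTop := by
  have hc : A / l < 0 := div_neg_of_neg_of_pos hA hl
  have hnn : ∀ x, A ≤ x → ∀ s ∈ Ioo x 0, 0 ≤ |s| ^ m * K s := fun x hx s hs =>
    mul_nonneg (pow_nonneg (abs_nonneg s) m) (hKpos s (hx.trans_lt hs.1)).le
  have hmass : Tendsto (fun x => ∫ s in Ioo x 0, |s| ^ m * K s) (𝓝[>] A) atTop :=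
    tendsto_setIntegral_Ioo_atTop_of_not_integrableOn hA
      (fun x hx => (((continuous_abs.pow m).continuousOn.mul hKcont).mono
        fun s hs => hx.1.trans_le hs.1).integrableOn_Icc.mono_set Ioo_subset_Icc_self)
      (fun s hs => hnn A le_rfl s hs) hKnint
  have hscale : Tendsto (· * l) (𝓝[>] (A / l)) (𝓝[>] A) := by
    refine tendsto_nhdsWithin_of_tendsto_nhds_of_eventually_within _ ?_ ?_
    · simpa [div_mul_cancel₀ A hl.ne'] using
        ((continuous_mul_const l).tendsto (A / l)).mono_left nhdsWithin_le_nhds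
    · filter_upwards [self_mem_nhdsWithin] with b hb
      exact (div_lt_iff₀ hl).1 hb
  refine tendsto_atTop_mono' _ ?_
    ((hmass.comp hscale).const_mul_atTop (inv_pos.2 (pow_pos (neg_pos.2 hc) (m + 1))))
  filter_upwards [Ioo_mem_nhdsGT hc] with b hb
  rw [eq_of_neg hl.le hb.2]
  exact mul_le_mul_of_nonneg_right
    (inv_anti₀ (pow_pos (neg_pos.2 hb.2) _) (pow_le_pow_left₀ (neg_nonneg.2 hb.2.le)
      (neg_le_neg hb.1.le) _))
    (setIntegral_nonneg measurableSet_Ioo (hnn _ ((div_lt_iff₀ hl).1 hb.1).le))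

end radialMass

theorem beta_exists_unique_general (n : ℕ) (A : ℝ) (hA : A < 0)
    (K : ℝ → ℝ)
    (hKcont : ContinuousOn K (Set.Ioi A))
    (hKanti : StrictAntiOn K (Set.Ioi A))
    (hKpos : ∀ t ∈ Set.Ioi A, 0 < K t)
    (hKint : IntegrableOn (fun t : ℝ => t ^ (n - 1) * K t) (Set.Ioi 0))
    (hKnint : ∀ δ > 0, ¬ IntegrableOn (fun t : ℝ => |t| ^ (n - 1) * K t) (Set.Ioo A (A + δ))) :
    ∀ l > 0, ∀ α > 0, ∃! b : ℝ,
      A / l < b ∧ ∫ t in Set.Ioo 0 l, t ^ (n - 1) * K (b * t) = α := by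
  intro l hl α hα
  have hKnint₀ : ¬ IntegrableOn (fun t => |t| ^ (n - 1) * K t) (Ioo A 0) := by
    simpa using hKnint (-A) (neg_pos.2 hA)
  exact StrictAntiOn.existsUnique_eq_of_tendsto (F := radialMass K (n - 1) l)
    (radialMass.strictAntiOn hA hl hKcont hKanti)
    (radialMass.continuousOn hA hl hKcont hKanti hKpos)
    (radialMass.tendsto_atTop hA hl hKpos hKint)
    (radialMass.tendsto_nhdsGT hA hl hKcont hKpos hKnint₀) hα

/-- Existence and uniqueness of the radial bandwidth `β(l)`: for every `l > 0` and `α > 0`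
there is a unique `β > A/l` with `∫₀^l t^{n−1} K(βt) dt = α`. -/
theorem beta_exists_unique (n : ℕ) (hn : 1 ≤ n) (A : ℝ) (hA : A < 0)
    (K : ℝ → ℝ)
    (hKcont : ContinuousOn K (Set.Ioi A))
    (hKanti : StrictAntiOn K (Set.Ioi A))
    (hKpos : ∀ t ∈ Set.Ioi A, 0 < K t)
    (hK0 : K 0 = 1)
    (hKint : IntegrableOn (fun t : ℝ => t ^ (n - 1) * K t) (Set.Ioi 0))
    (hKnint : ∀ δ > 0, ¬ IntegrableOn (fun t : ℝ => |t| ^ (n - 1) * K t) (Set.Ioo A (A + δ))) :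
    ∀ l > 0, ∀ α > 0, ∃! b : ℝ,
      A / l < b ∧ ∫ t in Set.Ioo 0 l, t ^ (n - 1) * K (b * t) = α :=
  beta_exists_unique_general n A hA K hKcont hKanti hKpos hKint hKnint
end

section
/- The function β(l) defined by ∫₀^l t^{n−1} K(β(l) t) dt = α satisfies lim_{l→+∞} β(l) = ( (1/α) ∫₀^∞ t^{n−1} K(t) dt )^{1/n}. -/
/-!
Substituting `s = β(l) t` turns the defining equation into
`β(l)ⁿ α = ∫₀^{β(l) l} sⁿ⁻¹ K(s) ds`. Comparing the integrand with `tⁿ⁻¹ K(0)` shows `β(l) > 0` for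
large `l`, and comparing it with `tⁿ⁻¹ K(β(l) l)` gives `K(β(l) l) ≤ n α / lⁿ → 0`, which forces
`β(l) l → ∞` because `K` is positive and decreasing. Hence `β(l)ⁿ → α⁻¹ ∫₀^∞ tⁿ⁻¹ K(t) dt`.
-/

open MeasureTheory Set Filter Topology

theorem integral_Ioo_pow_sub_one {n : ℕ} (hn : 1 ≤ n) {l : ℝ} (hl : 0 ≤ l) :
    ∫ t in Ioo 0 l, t ^ (n - 1) = l ^ n / n := by
  rw [← integral_Ioc_eq_integral_Ioo, ← intervalIntegral.integral_of_le hl, integral_pow,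
    Nat.sub_add_cancel hn, Nat.cast_sub hn, zero_pow (by omega)]
  push_cast
  ring

theorem mul_pow_div_le_setIntegral {n : ℕ} (hn : 1 ≤ n) {l m : ℝ} (hl : 0 ≤ l) {g : ℝ → ℝ}
    (hg : IntegrableOn (fun t => t ^ (n - 1) * g t) (Ioo 0 l)) (hm : ∀ t ∈ Ioo 0 l, m ≤ g t) :
    m * (l ^ n / n) ≤ ∫ t in Ioo 0 l, t ^ (n - 1) * g t := by
  rw [← integral_Ioo_pow_sub_one hn hl, ← integral_const_mul]
  have hpow : IntegrableOn (fun t : ℝ => m * t ^ (n - 1)) (Ioo 0 l) :=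
    (continuous_const.mul (continuous_pow _)).integrableOn_Icc.mono_set Ioo_subset_Icc_self
  refine setIntegral_mono_on hpow hg measurableSet_Ioo fun t ht => ?_
  rw [mul_comm]
  exact mul_le_mul_of_nonneg_left (hm t ht) (pow_nonneg ht.1.le _)

theorem intervalIntegral_pow_mul_eq_pow_mul_setIntegral_comp_mul {n : ℕ} (hn : 1 ≤ n)
    (K : ℝ → ℝ) (b : ℝ) {l : ℝ} (hl : 0 ≤ l) :
    ∫ s in (0 : ℝ)..b * l, s ^ (n - 1) * K s =
      b ^ n * ∫ t in Ioo 0 l, t ^ (n - 1) * K (b * t) := by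
  have hsub := intervalIntegral.smul_integral_comp_mul_left (a := 0) (b := l)
    (fun s => s ^ (n - 1) * K s) b
  rw [mul_zero] at hsub
  rw [← hsub, smul_eq_mul, intervalIntegral.integral_of_le hl, integral_Ioc_eq_integral_Ioo,
    ← integral_const_mul, ← integral_const_mul]
  congr 1
  funext t
  rw [mul_pow, ← pow_sub_one_mul (by omega : n ≠ 0)]
  ring

theorem pos_of_setIntegral_pow_mul_comp_mul_lt {n : ℕ} (hn : 1 ≤ n) {A : ℝ} (hA : A < 0)
    {K : ℝ → ℝ} (hK : AntitoneOn K (Ioi A)) (hK0 : K 0 = 1) {b l : ℝ} (hl : 0 < l)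
    (hbl : A < b * l) (hint : IntegrableOn (fun t => t ^ (n - 1) * K (b * t)) (Ioo 0 l))
    (hlt : ∫ t in Ioo 0 l, t ^ (n - 1) * K (b * t) < l ^ n / n) : 0 < b := by
  by_contra! hb
  refine hlt.not_ge ?_
  have hK1 : ∀ t ∈ Ioo 0 l, 1 ≤ K (b * t) := fun t ht => by
    rw [← hK0]
    exact hK (hbl.trans_le (mul_le_mul_of_nonpos_left ht.2.le hb)) hA
      (mul_nonpos_of_nonpos_of_nonneg hb ht.1.le)
  simpa using mul_pow_div_le_setIntegral hn hl.le hint hK1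

theorem mul_pow_div_le_setIntegral_pow_mul_comp_mul {n : ℕ} (hn : 1 ≤ n) {A : ℝ} (hA : A < 0)
    {K : ℝ → ℝ} (hK : AntitoneOn K (Ioi A)) {b l : ℝ} (hb : 0 ≤ b) (hl : 0 < l)
    (hint : IntegrableOn (fun t => t ^ (n - 1) * K (b * t)) (Ioo 0 l)) :
    K (b * l) * (l ^ n / n) ≤ ∫ t in Ioo 0 l, t ^ (n - 1) * K (b * t) := by
  refine mul_pow_div_le_setIntegral hn hl.le hint fun t ht => ?_
  have hmem : ∀ {s}, 0 ≤ s → b * s ∈ Ioi A := fun hs => hA.trans_le (mul_nonneg hb hs)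
  exact hK (hmem ht.1.le) (hmem hl.le) (mul_le_mul_of_nonneg_left ht.2.le hb)

theorem eventually_lt_pow_div {n : ℕ} (hn : 1 ≤ n) (c : ℝ) :
    ∀ᶠ l : ℝ in atTop, c < l ^ n / n :=
  ((tendsto_pow_atTop (by omega)).atTop_div_const (by positivity)).eventually_gt_atTop c

theorem eventually_pos_of_setIntegral_eq {n : ℕ} (hn : 1 ≤ n) {A α : ℝ} (hA : A < 0)
    (hα : α ≠ 0) {K β : ℝ → ℝ} (hK : AntitoneOn K (Ioi A)) (hK0 : K 0 = 1)
    (hβdom : ∀ l > 0, A / l < β l)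
    (hβ : ∀ l > 0, ∫ t in Ioo 0 l, t ^ (n - 1) * K (β l * t) = α) :
    ∀ᶠ l in atTop, 0 < β l := by
  filter_upwards [eventually_lt_pow_div hn α, eventually_gt_atTop 0] with l hαl hl
  refine pos_of_setIntegral_pow_mul_comp_mul_lt hn hA hK hK0 hl
    ((div_lt_iff₀ hl).1 (hβdom l hl)) ?_ (by rwa [hβ l hl])
  exact Integrable.of_integral_ne_zero (by rw [hβ l hl]; exact hα)

theorem tendsto_mul_atTop_of_setIntegral_eq {n : ℕ} (hn : 1 ≤ n) {A α : ℝ} (hA : A < 0)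
    (hα : α ≠ 0) {K β : ℝ → ℝ} (hK : StrictAntiOn K (Ioi A)) (hKpos : ∀ t ∈ Ioi A, 0 < K t)
    (hβpos : ∀ᶠ l in atTop, 0 < β l)
    (hβ : ∀ l > 0, ∫ t in Ioo 0 l, t ^ (n - 1) * K (β l * t) = α) :
    Tendsto (fun l => β l * l) atTop atTop := by
  refine tendsto_atTop.2 fun M => ?_
  have hM : max M 0 ∈ Ioi A := hA.trans_le (le_max_right M 0)
  filter_upwards [hβpos, eventually_lt_pow_div hn (α / K (max M 0)), eventually_gt_atTop 0]
    with l hb hαl hl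
  have hbound : K (β l * l) * (l ^ n / n) ≤ α := by
    rw [← hβ l hl]
    exact mul_pow_div_le_setIntegral_pow_mul_comp_mul hn hA hK.antitoneOn hb.le hl
      (Integrable.of_integral_ne_zero (by rw [hβ l hl]; exact hα))
  have hlt : K (β l * l) < K (max M 0) := by
    rw [div_lt_iff₀ (hKpos _ hM)] at hαl
    nlinarith [hKpos _ hM, (by positivity : (0 : ℝ) < l ^ n / n)]
  exact le_max_left M 0 |>.trans ((hK.lt_iff_gt (hA.trans (mul_pos hb hl)) hM).1 hlt).le

theorem beta_asymptote_general (n : ℕ) (hn : 1 ≤ n) (A : ℝ) (hA : A < 0) (α : ℝ) (hα : 0 < α)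
    (K : ℝ → ℝ)
    (hKanti : StrictAntiOn K (Set.Ioi A))
    (hKpos : ∀ t ∈ Set.Ioi A, 0 < K t)
    (hK0 : K 0 = 1)
    (hKint : IntegrableOn (fun t : ℝ => t ^ (n - 1) * K t) (Set.Ioi 0))
    (β : ℝ → ℝ)
    (hβdom : ∀ l > 0, A / l < β l)
    (hβ : ∀ l > 0, ∫ t in Set.Ioo 0 l, t ^ (n - 1) * K (β l * t) = α) :
    Filter.Tendsto β Filter.atTop
      (nhds ((α⁻¹ * ∫ t in Set.Ioi 0, t ^ (n - 1) * K t) ^ ((n : ℝ)⁻¹))) := by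
  have hβpos := eventually_pos_of_setIntegral_eq hn hA hα.ne' hKanti.antitoneOn hK0 hβdom hβ
  have hpow : Tendsto (fun l => β l ^ n) atTop
      (𝓝 (α⁻¹ * ∫ t in Ioi 0, t ^ (n - 1) * K t)) := by
    refine ((intervalIntegral_tendsto_integral_Ioi 0 hKint
      (tendsto_mul_atTop_of_setIntegral_eq hn hA hα.ne' hKanti hKpos hβpos hβ)).const_mul
        α⁻¹).congr' ?_
    filter_upwards [eventually_gt_atTop 0] with l hl
    rw [intervalIntegral_pow_mul_eq_pow_mul_setIntegral_comp_mul hn K _ hl.le, hβ l hl]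
    field_simp
  refine ((Real.continuousAt_rpow_const _ _ (Or.inr (by positivity))).tendsto.comp hpow).congr' ?_
  filter_upwards [hβpos] with l hl
  exact Real.pow_rpow_inv_natCast hl.le (by omega)

/-- Horizontal asymptote: `β(l) → ((1/α) ∫₀^∞ t^{n−1}K(t) dt)^{1/n}` as `l → +∞`. -/
theorem beta_asymptote (n : ℕ) (hn : 1 ≤ n) (A : ℝ) (hA : A < 0) (α : ℝ) (hα : 0 < α)
    (K : ℝ → ℝ)
    (hKcont : ContinuousOn K (Set.Ioi A))
    (hKanti : StrictAntiOn K (Set.Ioi A))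
    (hKpos : ∀ t ∈ Set.Ioi A, 0 < K t)
    (hK0 : K 0 = 1)
    (hKint : IntegrableOn (fun t : ℝ => t ^ (n - 1) * K t) (Set.Ioi 0))
    (hKnint : ∀ δ > 0, ¬ IntegrableOn (fun t : ℝ => |t| ^ (n - 1) * K t) (Set.Ioo A (A + δ)))
    (β : ℝ → ℝ)
    (hβdom : ∀ l > 0, A / l < β l)
    (hβ : ∀ l > 0, ∫ t in Set.Ioo 0 l, t ^ (n - 1) * K (β l * t) = α) :
    Filter.Tendsto β Filter.atTop
      (nhds ((α⁻¹ * ∫ t in Set.Ioi 0, t ^ (n - 1) * K t) ^ ((n : ℝ)⁻¹))) :=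
  beta_asymptote_general n hn A hA α hα K hKanti hKpos hK0 hKint β hβdom hβ
end

section
/- Let ε = (nα)^{1/n} and let p, q ∈ P be such that m = (p+q)/2 ∈ C(p) ∩ C(q) and d(p,q) < 2ε. Then for x in the segment from p to m, l(x) = d(p,q)/2 < ε, so β(l(x)) < 0, and hence the RVDE density f_P(x) = K(β(l(x)) d(x,p))/(α|P|Vol(S^{n−1})) is strictly increasing in d(x,p) along the segment; in particular f_P(m) > f_P(p). -/
/-!
On the ray from `p` towards `q`, the point at distance `t` from `p` is at distance `|d(p,q) - t|`
from `q`, so it can only lie in the Voronoi cell of `p` while `t ≤ d(p,q)/2`; since the midpoint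
does lie in it, the cell radius in that direction is exactly `d(p,q)/2`, and every point of the
segment `[p, m]` sees the same radius. If `β(r) ≥ 0`, then `K(β(r) t) ≤ K(0) = 1` gives
`α ≤ ∫₀^r t^{n-1} dt = r^n/n`, i.e. `r ≥ ε`; hence `β(d(p,q)/2) < 0`, and on the segment the density
is `K(β(d(p,q)/2) · d(x,p))` up to a positive constant, which increases with `d(x,p)`.
-/

open MeasureTheory

section Ray

variable {E : Type*} [NormedAddCommGroup E] [NormedSpace ℝ E]

lemma add_smul_inv_norm_smul_sub_eq_lineMap (p q : E) (t : ℝ) :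
    p + t • (‖q - p‖⁻¹ • (q - p)) = AffineMap.lineMap p q (t / dist p q) := by
  rw [AffineMap.lineMap_apply, dist_eq_norm', smul_smul, vsub_eq_sub, vadd_eq_add, add_comm,
    div_eq_mul_inv]

lemma le_half_of_dist_lineMap_le {p q : E} (hpq : p ≠ q) {c : ℝ} (hc : 0 ≤ c)
    (h : dist (AffineMap.lineMap p q c) p ≤ dist (AffineMap.lineMap p q c) q) : c ≤ 1 / 2 := by
  rw [dist_lineMap_left, dist_lineMap_right, Real.norm_of_nonneg hc,
    mul_le_mul_iff_left₀ (dist_pos.mpr hpq), Real.norm_eq_abs] at h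
  rcases le_abs.mp h with h | h <;> linarith

lemma sSup_ray_eq_half_dist {p q : E} (hpq : p ≠ q) {C : Set E}
    (hC : ∀ x ∈ C, dist x p ≤ dist x q) (hmid : midpoint ℝ p q ∈ C) :
    sSup {t : ℝ | 0 ≤ t ∧ p + t • (‖q - p‖⁻¹ • (q - p)) ∈ C} = dist p q / 2 := by
  have hd : 0 < dist p q := dist_pos.mpr hpq
  refine IsGreatest.csSup_eq ⟨⟨by positivity, ?_⟩, ?_⟩
  · simpa [add_smul_inv_norm_smul_sub_eq_lineMap, div_div_cancel_left' hd.ne', midpoint]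
      using hmid
  · rintro t ⟨ht, htC⟩
    rw [add_smul_inv_norm_smul_sub_eq_lineMap] at htC
    have := le_half_of_dist_lineMap_le hpq (by positivity) (hC _ htC)
    rwa [div_le_iff₀ hd, one_div_mul_eq_div] at this

lemma inv_norm_smul_sub_eq_of_mem_segment_midpoint {p q x : E}
    (hx : x ∈ segment ℝ p (midpoint ℝ p q)) (hxp : x ≠ p) :
    ‖x - p‖⁻¹ • (x - p) = ‖q - p‖⁻¹ • (q - p) := by
  have hqp : q ≠ p := by
    rintro rfl
    rw [midpoint_self, segment_same] at hx
    exact hxp hx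
  have hray : SameRay ℝ (x - p) (midpoint ℝ p q - p) := by
    simpa using (mem_segment_iff_sameRay.mp hx).add_right (SameRay.refl (x - p))
  rw [midpoint_eq_smul_add, invOf_eq_inv,
    show (2⁻¹ : ℝ) • (p + q) - p = (2⁻¹ : ℝ) • (q - p) by module] at hray
  refine (sameRay_iff_inv_norm_smul_eq_of_ne (sub_ne_zero.mpr hxp) (sub_ne_zero.mpr hqp)).mp ?_
  simpa using hray.pos_smul_right (show (0 : ℝ) < 2 by norm_num)

end Ray

section Kernel

lemma setIntegral_pow_mul_le_of_le_one {n : ℕ} (hn : 0 < n) {r : ℝ} (hr : 0 ≤ r) {g : ℝ → ℝ}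
    (hg : ∀ t ∈ Set.Ioo 0 r, g t ≤ 1) :
    ∫ t in Set.Ioo 0 r, t ^ (n - 1) * g t ≤ r ^ n / n := by
  have hpow : ∫ t in Set.Ioo 0 r, t ^ (n - 1) = r ^ n / n := by
    rw [← integral_Ioc_eq_integral_Ioo, ← intervalIntegral.integral_of_le hr, integral_pow,
      Nat.sub_add_cancel hn, zero_pow hn.ne', Nat.cast_sub hn]
    push_cast
    ring
  by_cases hint : IntegrableOn (fun t => t ^ (n - 1) * g t) (Set.Ioo 0 r)
  · rw [← hpow]
    refine setIntegral_mono_on hint ?_ measurableSet_Ioo fun t ht => ?_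
    · exact (continuous_pow (n - 1)).integrableOn_Icc.mono_set Set.Ioo_subset_Icc_self
    · exact mul_le_of_le_one_right (pow_nonneg ht.1.le _) (hg t ht)
  · rw [integral_undef hint]
    positivity

lemma neg_of_setIntegral_pow_mul_eq {n : ℕ} (hn : 0 < n) {α b r : ℝ} (hα : 0 ≤ α)
    {K : ℝ → ℝ} (hK : ∀ s, 0 ≤ s → K s ≤ 1) (hr : 0 ≤ r)
    (hb : ∫ t in Set.Ioo 0 r, t ^ (n - 1) * K (b * t) = α)
    (hlt : r < ((n : ℝ) * α) ^ ((n : ℝ)⁻¹)) : b < 0 := by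
  by_contra! hb0
  have hαr : α ≤ r ^ n / n :=
    hb ▸ setIntegral_pow_mul_le_of_le_one hn hr fun t ht => hK _ (by nlinarith [ht.1])
  have hn' : (0 : ℝ) < n := Nat.cast_pos.mpr hn
  refine hlt.not_ge ((Real.rpow_inv_le_iff_of_pos (by positivity) hr hn').mpr ?_)
  rw [Real.rpow_natCast]
  rwa [le_div_iff₀ hn', mul_comm] at hαr

lemma strictMonoOn_comp_mul_of_neg {K : ℝ → ℝ} {A b r : ℝ} (hK : StrictAntiOn K (Set.Ioi A))
    (hb : b < 0) (hbr : A < b * r) : StrictMonoOn (fun s => K (b * s)) (Set.Iic r) := by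
  intro x hx y hy hxy
  have hy' : A < b * y := hbr.trans_le (mul_le_mul_of_nonpos_left hy hb.le)
  exact hK hy' (hy'.trans (mul_lt_mul_of_neg_left hxy hb)) (mul_lt_mul_of_neg_left hxy hb)

end Kernel

theorem rvde_mode_at_midpoint_general (n : ℕ) (hn : 1 ≤ n) (A α V : ℝ)
    (hA : A < 0) (hα : 0 < α) (hV : 0 < V)
    (K : ℝ → ℝ)
    (hKanti : StrictAntiOn K (Set.Ioi A))
    (hK0 : K 0 = 1)
    (β : ℝ → ℝ)
    (hβdom : ∀ r > 0, A / r < β r)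
    (hβ : ∀ r > 0, ∫ t in Set.Ioo 0 r, t ^ (n - 1) * K (β r * t) = α)
    (P : Finset (EuclideanSpace ℝ (Fin n))) (p q : EuclideanSpace ℝ (Fin n))
    (hp : p ∈ P) (hq : q ∈ P) (hpq : p ≠ q)
    (C : EuclideanSpace ℝ (Fin n) → Set (EuclideanSpace ℝ (Fin n)))
    (hC : ∀ r, C r = {x | ∀ s ∈ P, dist x r ≤ dist x s})
    (l : EuclideanSpace ℝ (Fin n) → ℝ)
    (hl : ∀ x, l x = sSup {t : ℝ | 0 ≤ t ∧ p + t • (‖x - p‖⁻¹ • (x - p)) ∈ C p})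
    (f : EuclideanSpace ℝ (Fin n) → ℝ)
    (hf : ∀ x, f x = K (β (l x) * dist x p) / (α * (P.card : ℝ) * V))
    (ε : ℝ) (hε : ε = ((n : ℝ) * α) ^ ((n : ℝ)⁻¹))
    (m : EuclideanSpace ℝ (Fin n)) (hm : m = midpoint ℝ p q)
    (hmem : m ∈ C p ∩ C q) (hdist : dist p q < 2 * ε) :
    (∀ x ∈ segment ℝ p m, x ≠ p → l x = dist p q / 2 ∧ l x < ε ∧ β (l x) < 0) ∧
    (∀ x ∈ segment ℝ p m, ∀ y ∈ segment ℝ p m, dist x p < dist y p → f x < f y) ∧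
    f p < f m := by
  set r := dist p q / 2 with hr_def
  have hr : 0 < r := half_pos (dist_pos.mpr hpq)
  have hrε : r < ε := by rw [hr_def]; linarith
  have hl_seg : ∀ x ∈ segment ℝ p m, x ≠ p → l x = r := fun x hx hxp => by
    subst hm
    rw [hl, inv_norm_smul_sub_eq_of_mem_segment_midpoint hx hxp]
    exact sSup_ray_eq_half_dist hpq (fun y hy => by rw [hC] at hy; exact hy q hq) hmem.1
  have hK_le : ∀ s, 0 ≤ s → K s ≤ 1 := fun s hs =>
    hK0 ▸ hKanti.antitoneOn hA (hA.trans_le hs) hs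
  have hβr : β r < 0 :=
    neg_of_setIntegral_pow_mul_eq hn hα.le hK_le hr.le (hβ r hr) (hε ▸ hrε)
  have hKβ := strictMonoOn_comp_mul_of_neg hKanti hβr ((div_lt_iff₀ hr).mp (hβdom r hr))
  have hf_seg : ∀ x ∈ segment ℝ p m, f x = K (β r * dist x p) / (α * (P.card : ℝ) * V) := by
    intro x hx
    by_cases hxp : x = p
    · simp [hf, hxp]
    · rw [hf, hl_seg x hx hxp]
  have hpm : dist p m = r := by
    rw [hm, dist_left_midpoint, Real.norm_ofNat, inv_mul_eq_div]
  have hdist_seg : ∀ x ∈ segment ℝ p m, dist x p ≤ r := fun x hx => by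
    linarith [dist_add_dist_of_mem_segment hx, dist_nonneg (x := x) (y := m), dist_comm x p]
  have hcard : (0 : ℝ) < P.card := Nat.cast_pos.mpr (Finset.card_pos.mpr ⟨p, hp⟩)
  have hmono : ∀ x ∈ segment ℝ p m, ∀ y ∈ segment ℝ p m, dist x p < dist y p → f x < f y := by
    intro x hx y hy hxy
    rw [hf_seg x hx, hf_seg y hy]
    gcongr
    exact hKβ (hdist_seg x hx) (hdist_seg y hy) hxy
  refine ⟨fun x hx hxp => ?_, hmono,
    hmono p (left_mem_segment ℝ p m) m (right_mem_segment ℝ p m) ?_⟩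
  · rw [hl_seg x hx hxp]
    exact ⟨rfl, hrε, hβr⟩
  · rwa [dist_self, dist_comm, hpm]

/-- If `m = (p+q)/2 ∈ C(p) ∩ C(q)` and `d(p,q) < 2ε` with `ε = (nα)^{1/n}`, then along the
segment from `p` to `m` we have `l(x) = d(p,q)/2 < ε`, hence `β(l(x)) < 0`, the RVDE density
is strictly increasing in `d(x,p)` along the segment, and in particular `f_P(m) > f_P(p)`. -/
theorem rvde_mode_at_midpoint (n : ℕ) (hn : 1 ≤ n) (A α V : ℝ)
    (hA : A < 0) (hα : 0 < α) (hV : 0 < V)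
    (K : ℝ → ℝ)
    (hKanti : StrictAntiOn K (Set.Ioi A))
    (hK0 : K 0 = 1)
    (hKpos : ∀ t ∈ Set.Ioi A, 0 < K t)
    (β : ℝ → ℝ)
    (hβdom : ∀ r > 0, A / r < β r)
    (hβ : ∀ r > 0, ∫ t in Set.Ioo 0 r, t ^ (n - 1) * K (β r * t) = α)
    (P : Finset (EuclideanSpace ℝ (Fin n))) (p q : EuclideanSpace ℝ (Fin n))
    (hp : p ∈ P) (hq : q ∈ P) (hpq : p ≠ q)
    (C : EuclideanSpace ℝ (Fin n) → Set (EuclideanSpace ℝ (Fin n)))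
    (hC : ∀ r, C r = {x | ∀ s ∈ P, dist x r ≤ dist x s})
    (l : EuclideanSpace ℝ (Fin n) → ℝ)
    (hl : ∀ x, l x = sSup {t : ℝ | 0 ≤ t ∧ p + t • (‖x - p‖⁻¹ • (x - p)) ∈ C p})
    (f : EuclideanSpace ℝ (Fin n) → ℝ)
    (hf : ∀ x, f x = K (β (l x) * dist x p) / (α * (P.card : ℝ) * V))
    (ε : ℝ) (hε : ε = ((n : ℝ) * α) ^ ((n : ℝ)⁻¹))
    (m : EuclideanSpace ℝ (Fin n)) (hm : m = midpoint ℝ p q)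
    (hmem : m ∈ C p ∩ C q) (hdist : dist p q < 2 * ε) :
    (∀ x ∈ segment ℝ p m, x ≠ p → l x = dist p q / 2 ∧ l x < ε ∧ β (l x) < 0) ∧
    (∀ x ∈ segment ℝ p m, ∀ y ∈ segment ℝ p m, dist x p < dist y p → f x < f y) ∧
    f p < f m :=
  rvde_mode_at_midpoint_general n hn A α V hA hα hV K hKanti hK0 β hβdom hβ P p q hp hq hpq C hC l
    hl f hf ε hε m hm hmem hdist
end
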